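/- arXiv:2212.05029 — 2 statements merged into one kernel-verified Lean document; each statement's English description precedes it below -/
import Mathlib

section
/- Let K be a number field generated by a root θ of a monic irreducible polynomial F(x) ∈ ℤ[x], and let p be a prime such that the number of distinct prime ideals of ℤ_K lying above p with residue degree f exceeds the number of monic irreducible polynomials of degree f in 𝔽_p[x] for some positive integer f. Then for every algebraic integer η with K = ℚ(η), p divides the index (ℤ_K : ℤ[η]); in particular K is not monogenic. -/
open Polynomial NumberField Ideal RingOfIntegers UniqueFactorizationMonoid

/-!
If `p` does not divide the index of `ℤ[η]`, it does not divide the exponent of the conductor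
of `η`, so the Kummer–Dedekind theorem applies: the primes of `𝓞 K` above `p` correspond
bijectively to the monic irreducible factors of the minimal polynomial of `η` modulo `p`, and
the residue degree of a prime is the degree of its factor. Hence there can be at most as many
primes of residue degree `f` above `p` as monic irreducible polynomials of degree `f` over `𝔽_p`.
-/

theorem Polynomial.finite_setOf_natDegree_le (R : Type*) [Semiring R] [Finite R] (n : ℕ) :
    {g : R[X] | g.natDegree ≤ n}.Finite := by
  have : Finite (degreeLT R (n + 1)) := .of_equiv _ (degreeLTEquiv R (n + 1)).symm.toEquiv
  refine (Set.toFinite (degreeLT R (n + 1) : Set R[X])).subset fun g hg => ?_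
  rw [SetLike.mem_coe, mem_degreeLT]
  exact (degree_le_natDegree.trans (WithBot.coe_le_coe.mpr hg)).trans_lt
    (WithBot.coe_lt_coe.mpr n.lt_succ_self)

theorem Ideal.mem_primesOver_span_natCast {S : Type*} [CommRing S] {P : Ideal S} [P.IsPrime]
    {p : ℕ} (hp : p.Prime) (hpP : (p : S) ∈ P) : P ∈ (span {(p : ℤ)}).primesOver S :=
  ⟨‹_›, (liesOver_span_iff IsPrime.ne_top' (Nat.prime_iff_prime_int.mp hp)).mpr <| by
    simpa using hpP⟩

namespace RingOfIntegers

variable {K : Type*} [Field K]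

theorem exponent_dvd_index (θ : 𝓞 K) :
    exponent θ ∣
      (Algebra.adjoin ℤ {θ} : Subalgebra ℤ (𝓞 K)).toSubring.toAddSubgroup.index := by
  set H := (Algebra.adjoin ℤ {θ} : Subalgebra ℤ (𝓞 K)).toSubring.toAddSubgroup
  have hn : ((H.index : ℤ) : 𝓞 K) ∈ conductor ℤ θ := mem_conductor_iff.mpr fun b => by
    rw [Int.cast_natCast, ← nsmul_eq_mul]
    exact H.nsmul_index_mem b
  exact Int.natCast_dvd_natCast.mp (Int.cast_mem_ideal_iff.mp hn)

theorem monic_irreducible_of_mem_monicFactorsMod {θ : 𝓞 K} {p : ℕ} [Fact p.Prime]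
    {Q : (ZMod p)[X]} (hQ : Q ∈ monicFactorsMod θ p) : Q.Monic ∧ Irreducible Q := by
  rw [Multiset.mem_toFinset] at hQ
  refine ⟨?_, irreducible_of_normalized_factor _ hQ⟩
  rw [← normalize_normalized_factor _ hQ]
  exact monic_normalize (ne_zero_of_mem_normalizedFactors hQ)

end RingOfIntegers

namespace NumberField.Ideal

variable {K : Type*} [Field K] [NumberField K] {p : ℕ} [Fact p.Prime]

attribute [local instance] Int.ideal_span_isMaximal_of_prime

theorem natDegree_primesOverSpanEquivMonicFactorsMod {θ : 𝓞 K} (hp : ¬ p ∣ exponent θ)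
    (P : (span {(p : ℤ)}).primesOver (𝓞 K)) :
    (primesOverSpanEquivMonicFactorsMod hp P : (ZMod p)[X]).natDegree =
      inertiaDeg' (span {(p : ℤ)}) (P : Ideal (𝓞 K)) := by
  have := primesOver.isMaximal P
  have := P.2.2
  rw [← inertiaDeg_primesOverSpanEquivMonicFactorsMod_symm_apply' hp (Subtype.prop _),
    Subtype.coe_eta, Equiv.symm_apply_apply, inertiaDeg'_eq_inertiaDeg]

theorem card_primesOver_inertiaDeg_le_card_monic_irreducible {θ : 𝓞 K}
    (hp : ¬ p ∣ exponent θ) (f : ℕ) :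
    Nat.card {P : Ideal (𝓞 K) // P.IsMaximal ∧ (p : 𝓞 K) ∈ P ∧
        inertiaDeg' (span {(p : ℤ)}) P = f} ≤
      Nat.card {g : (ZMod p)[X] // g.Monic ∧ Irreducible g ∧ g.natDegree = f} := by
  have : Finite {g : (ZMod p)[X] // g.Monic ∧ Irreducible g ∧ g.natDegree = f} :=
    (finite_setOf_natDegree_le (ZMod p) f).subset fun g hg => hg.2.2.le
  let toPrimesOver (P : {P : Ideal (𝓞 K) // P.IsMaximal ∧ (p : 𝓞 K) ∈ P ∧
      inertiaDeg' (span {(p : ℤ)}) P = f}) : (span {(p : ℤ)}).primesOver (𝓞 K) :=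
    ⟨P, have := P.2.1; mem_primesOver_span_natCast Fact.out P.2.2.1⟩
  refine Nat.card_le_card_of_injective (fun P => ⟨primesOverSpanEquivMonicFactorsMod hp
      (toPrimesOver P), monic_irreducible_of_mem_monicFactorsMod (Subtype.prop _) |>.1,
      monic_irreducible_of_mem_monicFactorsMod (Subtype.prop _) |>.2,
      (natDegree_primesOverSpanEquivMonicFactorsMod hp _).trans P.2.2.2⟩) fun P₁ P₂ h => ?_
  rw [Subtype.mk.injEq, ← Subtype.ext_iff,
    (primesOverSpanEquivMonicFactorsMod hp).apply_eq_iff_eq, Subtype.ext_iff] at h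
  exact Subtype.ext h

theorem dvd_exponent_of_card_monic_irreducible_lt {f : ℕ}
    (h : Nat.card {g : (ZMod p)[X] // g.Monic ∧ Irreducible g ∧ g.natDegree = f}
      < Nat.card {P : Ideal (𝓞 K) // P.IsMaximal ∧ (p : 𝓞 K) ∈ P ∧
          inertiaDeg' (span {(p : ℤ)}) P = f}) (θ : 𝓞 K) :
    p ∣ exponent θ :=
  by_contra fun hp => h.not_ge (card_primesOver_inertiaDeg_le_card_monic_irreducible hp f)

end NumberField.Ideal

theorem common_index_divisor_of_many_primes_general (K : Type*) [Field K] [NumberField K]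
    (p : ℕ) (hp : p.Prime) (f : ℕ)
    (h : Nat.card {g : (ZMod p)[X] // g.Monic ∧ Irreducible g ∧ g.natDegree = f}
        < Nat.card {P : Ideal (𝓞 K) // P.IsMaximal ∧ (p : 𝓞 K) ∈ P ∧
            Ideal.inertiaDeg' (Ideal.span {(p : ℤ)}) P = f}) :
    (∀ η : 𝓞 K, Algebra.adjoin ℚ {(η : K)} = ⊤ →
        p ∣ (Algebra.adjoin ℤ {η} : Subalgebra ℤ (𝓞 K)).toSubring.toAddSubgroup.index) ∧
    ¬ ∃ η : 𝓞 K, Algebra.adjoin ℤ {η} = ⊤ := by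
  have := Fact.mk hp
  refine ⟨fun η _ =>
    (dvd_exponent_of_card_monic_irreducible_lt h η).trans (exponent_dvd_index η),
    fun ⟨η, hη⟩ => hp.not_dvd_one ?_⟩
  rw [← exponent_eq_one_iff.mpr hη]
  exact dvd_exponent_of_card_monic_irreducible_lt h η

/-- If the number of distinct prime ideals of `ℤ_K` above `p` with residue degree `f`
exceeds the number of monic irreducible polynomials of degree `f` over `𝔽_p`, then `p`
divides the index `(ℤ_K : ℤ[η])` for every generator `η`; in particular `K` is not
monogenic. -/
theorem common_index_divisor_of_many_primes (K : Type*) [Field K] [NumberField K]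
    (F : ℤ[X]) (hFmonic : F.Monic) (hFirr : Irreducible F)
    (θ : K) (hθ : Polynomial.aeval θ F = 0) (hgen : Algebra.adjoin ℚ {θ} = ⊤)
    (p : ℕ) (hp : p.Prime) (f : ℕ) (hf : 0 < f)
    (h : Nat.card {g : (ZMod p)[X] // g.Monic ∧ Irreducible g ∧ g.natDegree = f}
        < Nat.card {P : Ideal (𝓞 K) // P.IsMaximal ∧ (p : 𝓞 K) ∈ P ∧
            Ideal.inertiaDeg' (Ideal.span {(p : ℤ)}) P = f}) :
    (∀ η : 𝓞 K, Algebra.adjoin ℚ {(η : K)} = ⊤ →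
        p ∣ (Algebra.adjoin ℤ {η} : Subalgebra ℤ (𝓞 K)).toSubring.toAddSubgroup.index) ∧
    ¬ ∃ η : 𝓞 K, Algebra.adjoin ℤ {η} = ⊤ :=
  common_index_divisor_of_many_primes_general K p hp f h
end

section
/- If a ≡ 1 (mod 5) and b ≢ 0 (mod 5), then in 𝔽₅[x] the polynomial x^9 + x + b̄ has exactly one repeated root in 𝔽₅, that root has multiplicity 2, and the remaining factor of degree 7 is coprime to the corresponding linear factor; that is, x^9 + x + b̄ = φ₁(x)²·φ₂(x) for monic φ₁, φ₂ ∈ 𝔽₅[x] with deg φ₁ = 1, deg φ₂ = 7 and φ₁ not dividing φ₂. -/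
open Polynomial

private lemma zmod5_cases : ∀ x : ZMod 5, x ≠ 0 → x = 1 ∨ x = 2 ∨ x = 3 ∨ x = 4 := by decide

private lemma zmod5_e1 : (1 + 2304 * (1 : ZMod 5)) = 0 := by decide

private lemma zmod5_e2 : (4096 : ZMod 5) = 1 := by decide

private lemma zmod5_eval₂ : ∀ x : ZMod 5, x ≠ 0 →
    (2 * x) ^ 7 + 4 * x * (2 * x) ^ 6 + 12 * x ^ 2 * (2 * x) ^ 5 + 32 * x ^ 3 * (2 * x) ^ 4
      + 80 * x ^ 4 * (2 * x) ^ 3 + 192 * x ^ 5 * (2 * x) ^ 2 + 448 * x ^ 6 * (2 * x)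
      + 1024 * x ^ 7 ≠ 0 := by decide

private lemma zmod5_uniq : ∀ x r : ZMod 5, x ≠ 0 →
    r ^ 9 + r + x = 0 → 9 * r ^ 8 + 1 = 0 → r = 2 * x := by decide

private lemma zmod5_root : ∀ x : ZMod 5, x ≠ 0 → (2 * x) ^ 9 + 2 * x + x = 0 := by decide

private lemma zmod5_root' : ∀ x : ZMod 5, x ≠ 0 → 9 * (2 * x) ^ 8 + 1 = 0 := by decide

/-- If `a ≡ 1 (mod 5)` and `5 ∤ b`, then in `𝔽₅[x]` the polynomial `x^9 + a x + b`
factors as `φ₁² φ₂` with `φ₁` monic irreducible of degree `1` not dividing the monic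
degree-7 polynomial `φ₂`; more precisely the reduction has exactly one repeated root
in `𝔽₅`, of multiplicity `2`. -/
theorem factorization_mod_five (a b : ℤ) (ha : a ≡ 1 [ZMOD 5]) (hb : ¬ (5 : ℤ) ∣ b) :
    ∃ φ₁ φ₂ : (ZMod 5)[X], φ₁.Monic ∧ φ₂.Monic ∧
      φ₁.natDegree = 1 ∧ φ₂.natDegree = 7 ∧
      (X ^ 9 + C a * X + C b : ℤ[X]).map (Int.castRingHom (ZMod 5)) = φ₁ ^ 2 * φ₂ ∧
      Irreducible φ₁ ∧ ¬ φ₁ ∣ φ₂ ∧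
      (∃! r : ZMod 5,
        ((X ^ 9 + C a * X + C b : ℤ[X]).map (Int.castRingHom (ZMod 5))).eval r = 0 ∧
        (derivative ((X ^ 9 + C a * X + C b : ℤ[X]).map (Int.castRingHom (ZMod 5)))).eval r = 0) ∧
      (∀ r : ZMod 5,
        ((X ^ 9 + C a * X + C b : ℤ[X]).map (Int.castRingHom (ZMod 5))).eval r = 0 →
        (derivative ((X ^ 9 + C a * X + C b : ℤ[X]).map (Int.castRingHom (ZMod 5)))).eval r = 0 →
        ((X ^ 9 + C a * X + C b : ℤ[X]).map (Int.castRingHom (ZMod 5))).rootMultiplicity r = 2) := by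
  haveI : Fact (Nat.Prime 5) := ⟨by norm_num⟩
  set c : ZMod 5 := (b : ZMod 5) with hc_def
  have ha' : Int.castRingHom (ZMod 5) a = 1 := by
    have := (ZMod.intCast_eq_intCast_iff _ _ _).mpr ha
    simpa using this
  have hb' : Int.castRingHom (ZMod 5) b = c := rfl
  have hc : c ≠ 0 := by
    simpa [hc_def, ZMod.intCast_zmod_eq_zero_iff_dvd] using hb
  have hc4 : c ^ 4 = 1 := ZMod.pow_card_sub_one_eq_one hc
  have h8 : c ^ 8 = 1 := by
    rw [show (8 : ℕ) = 4 * 2 by norm_num, pow_mul, hc4, one_pow]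
  have h9 : c ^ 9 = c := by
    rw [show (9 : ℕ) = 8 + 1 by norm_num, pow_succ, h8, one_mul]
  have hmap : (X ^ 9 + C a * X + C b : ℤ[X]).map (Int.castRingHom (ZMod 5))
      = X ^ 9 + X + C c := by
    rw [Polynomial.map_add, Polynomial.map_add, Polynomial.map_pow, Polynomial.map_mul,
      Polynomial.map_X, Polynomial.map_C, Polynomial.map_C, ha', hb', C_1, one_mul]
  set φ₁ : (ZMod 5)[X] := X - C (2 * c) with hφ₁
  set φ₂ : (ZMod 5)[X] := X ^ 7 + C (4 * c) * X ^ 6 + C (12 * c ^ 2) * X ^ 5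
      + C (32 * c ^ 3) * X ^ 4 + C (80 * c ^ 4) * X ^ 3 + C (192 * c ^ 5) * X ^ 2
      + C (448 * c ^ 6) * X + C (1024 * c ^ 7) with hφ₂
  have key : (X ^ 9 + X + C c : (ZMod 5)[X]) = φ₁ ^ 2 * φ₂ := by
    have expand : (X ^ 9 + X + C c : (ZMod 5)[X])
        = φ₁ ^ 2 * φ₂ + C (1 + 2304 * c ^ 8) * X + C (c - 4096 * c ^ 9) := by
      simp only [hφ₁, hφ₂, map_add, map_mul, map_sub, map_pow, map_one, map_ofNat, C_1]
      ring
    have e1 : (1 + 2304 * c ^ 8) = 0 := by rw [h8]; exact zmod5_e1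
    have e2 : (c - 4096 * c ^ 9) = 0 := by rw [h9, zmod5_e2]; ring
    rw [expand, e1, e2]
    simp
  have hmon₁ : φ₁.Monic := monic_X_sub_C _
  have hmon₂ : φ₂.Monic := by
    rw [hφ₂]; monicity!
  have hdeg₂ : φ₂.natDegree = 7 := by
    rw [hφ₂]; compute_degree!
  have heval₂ : φ₂.eval (2 * c) ≠ 0 := by
    rw [hφ₂]
    simp only [eval_add, eval_mul, eval_pow, eval_X, eval_C]
    exact zmod5_eval₂ c hc
  have hndvd : ¬ φ₁ ∣ φ₂ := by
    rw [hφ₁, dvd_iff_isRoot]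
    exact heval₂
  have hevalG : ∀ r : ZMod 5, (X ^ 9 + X + C c : (ZMod 5)[X]).eval r = r ^ 9 + r + c := by
    intro r; simp
  have hevalD : ∀ r : ZMod 5,
      (derivative (X ^ 9 + X + C c : (ZMod 5)[X])).eval r = 9 * r ^ 8 + 1 := by
    intro r
    simp [derivative_add, derivative_pow]
    try ring
  have huniq : ∀ r : ZMod 5, r ^ 9 + r + c = 0 → 9 * r ^ 8 + 1 = 0 → r = 2 * c :=
    fun r h1 h2 => zmod5_uniq c r hc h1 h2
  have hne : (X ^ 9 + X + C c : (ZMod 5)[X]) ≠ 0 := by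
    rw [key]
    exact ((hmon₁.pow 2).mul hmon₂).ne_zero
  have hmult : ((X ^ 9 + X + C c : (ZMod 5)[X])).rootMultiplicity (2 * c) = 2 := by
    rw [key, rootMultiplicity_mul (key ▸ hne), hφ₁, rootMultiplicity_X_sub_C_pow,
      rootMultiplicity_eq_zero heval₂]
  refine ⟨φ₁, φ₂, hmon₁, hmon₂, natDegree_X_sub_C _, hdeg₂, by rw [hmap, key],
    irreducible_X_sub_C _, hndvd, ?_, ?_⟩
  · refine ⟨2 * c, ⟨?_, ?_⟩, ?_⟩
    · rw [hmap, hevalG]; exact zmod5_root c hc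
    · rw [hmap, hevalD]; exact zmod5_root' c hc
    · rintro r ⟨h1, h2⟩
      rw [hmap, hevalG] at h1
      rw [hmap, hevalD] at h2
      exact huniq r h1 h2
  · intro r h1 h2
    rw [hmap, hevalG] at h1
    rw [hmap, hevalD] at h2
    rw [huniq r h1 h2, hmap]
    exact hmult
end
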